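/- 𝒩(𝒬) coincides with the set of all u ∈ C(M,ℝ) such that ∫_M u·Q_ω dμ_ω = 0 for every ω ∈ C(M,ℝ). (Proposition 3.1: 𝒩(𝒬) = ⋂_{g∈c} 𝒩(𝒬̄^g).) -/

import Mathlib

/-!
The density `e^{nω}` of `μ_ω` cancels the factor `e^{-nω}` in `Q_ω`, so by self-adjointness
`∫ u Q_ω dμ_ω = ∫ u Q dμ + ∫ (P u) ω dμ`. This vanishes for every `ω` iff `∫ u Q dμ = 0`
(take `ω = 0`) and `P u = 0` (take `ω = P u`: a continuous function with `∫ (P u)² dμ = 0`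
vanishes, as `μ` charges every nonempty open set).
-/

open MeasureTheory

variable {M : Type*} [TopologicalSpace M] [MeasurableSpace M]

/-- The transformed Q-curvature `Q_ω = e^{-nω}(Q + Pω)`. -/
noncomputable def Qcurv (n : ℝ) (P : C(M, ℝ) →ₗ[ℝ] C(M, ℝ)) (Q ω : C(M, ℝ)) : C(M, ℝ) :=
  ⟨fun x => Real.exp (-n * ω x) * (Q x + P ω x),
    (Real.continuous_exp.comp (continuous_const.mul ω.continuous)).mul
      (Q.continuous.add (P ω).continuous)⟩

/-- The conformally rescaled measure `μ_ω`, with density `e^{nω}` w.r.t. `μ`. -/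
noncomputable def confMeasure (μ : Measure M) (n : ℝ) (ω : C(M, ℝ)) : Measure M :=
  μ.withDensity fun x => ENNReal.ofReal (Real.exp (n * ω x))

/-- `𝒩(𝒬) = {u ∈ ker P : ∫ u·Q dμ = 0}`. -/
def NQ (μ : Measure M) (P : C(M, ℝ) →ₗ[ℝ] C(M, ℝ)) (Q : C(M, ℝ)) : Set C(M, ℝ) :=
  {u | P u = 0 ∧ ∫ x, u x * Q x ∂μ = 0}

/-- `ℱ = ⋂_ω ℱ^ω`, where `ℱ^ω` is the set of `f` not `L²(μ_ω)`-orthogonal to `𝒩(𝒬)`. -/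
def Fcal (μ : Measure M) (n : ℝ) (P : C(M, ℝ) →ₗ[ℝ] C(M, ℝ)) (Q : C(M, ℝ)) : Set C(M, ℝ) :=
  {f | ∀ ω : C(M, ℝ), ∃ u ∈ NQ μ P Q, ∫ x, f x * u x ∂(confMeasure μ n ω) ≠ 0}

lemma integral_confMeasure [OpensMeasurableSpace M] (μ : Measure M) (n : ℝ) (ω : C(M, ℝ))
    (f : M → ℝ) :
    ∫ x, f x ∂(confMeasure μ n ω) = ∫ x, Real.exp (n * ω x) * f x ∂μ := by
  have hmeas : Measurable fun x => ENNReal.ofReal (Real.exp (n * ω x)) :=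
    ENNReal.measurable_ofReal.comp (by fun_prop)
  rw [confMeasure, integral_withDensity_eq_integral_toReal_smul hmeas
    (.of_forall fun _ => ENNReal.ofReal_lt_top)]
  simp only [ENNReal.toReal_ofReal (Real.exp_nonneg _), smul_eq_mul]

lemma integral_mul_Qcurv_confMeasure [OpensMeasurableSpace M] (μ : Measure M) (n : ℝ)
    (P : C(M, ℝ) →ₗ[ℝ] C(M, ℝ)) (Q ω : C(M, ℝ)) (u : M → ℝ) :
    ∫ x, u x * Qcurv n P Q ω x ∂(confMeasure μ n ω) = ∫ x, u x * (Q x + P ω x) ∂μ := by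
  rw [integral_confMeasure]
  congr 1 with x
  have hexp : Real.exp (n * ω x) * Real.exp (-n * ω x) = 1 := by
    rw [← Real.exp_add]; simp
  simp only [Qcurv, ContinuousMap.coe_mk]
  linear_combination (u x * (Q x + P ω x)) * hexp

lemma integral_mul_add_apply_eq [OpensMeasurableSpace M] [CompactSpace M] (μ : Measure M)
    [IsFiniteMeasure μ] (P : C(M, ℝ) →ₗ[ℝ] C(M, ℝ))
    (hP : ∀ u v : C(M, ℝ), ∫ x, u x * P v x ∂μ = ∫ x, P u x * v x ∂μ) (Q u ω : C(M, ℝ)) :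
    ∫ x, u x * (Q x + P ω x) ∂μ = ∫ x, u x * Q x ∂μ + ∫ x, P u x * ω x ∂μ := by
  have hint (f g : C(M, ℝ)) : Integrable (fun x => f x * g x) μ :=
    (f * g).continuous.integrable_of_hasCompactSupport (.of_compactSpace _)
  simp only [mul_add]
  rw [integral_add (hint u Q) (hint u (P ω)), hP]

lemma ContinuousMap.eq_zero_of_integral_mul_self_eq_zero [OpensMeasurableSpace M]
    [CompactSpace M] (μ : Measure M) [IsFiniteMeasure μ] [μ.IsOpenPosMeasure] {v : C(M, ℝ)}
    (hv : ∫ x, v x * v x ∂μ = 0) : v = 0 := by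
  have hint : Integrable (v * v) μ :=
    (v * v).continuous.integrable_of_hasCompactSupport (.of_compactSpace _)
  have hae : (v * v : M → ℝ) =ᵐ[μ] 0 :=
    (integral_eq_zero_iff_of_nonneg (fun x => mul_self_nonneg (v x)) hint).mp hv
  have hsq : v * v = 0 := DFunLike.coe_injective <|
    ((v * v).continuous.ae_eq_iff_eq μ continuous_const).mp hae
  ext x
  simpa using congr($hsq x)

lemma forall_add_integral_mul_eq_zero_iff [OpensMeasurableSpace M] [CompactSpace M]
    (μ : Measure M) [IsFiniteMeasure μ] [μ.IsOpenPosMeasure] (c : ℝ) (v : C(M, ℝ)) :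
    (∀ ω : C(M, ℝ), c + ∫ x, v x * ω x ∂μ = 0) ↔ c = 0 ∧ v = 0 := by
  refine ⟨fun h => ?_, fun ⟨hc, hv⟩ _ => by simp [hc, hv]⟩
  have hc : c = 0 := by simpa using h 0
  refine ⟨hc, v.eq_zero_of_integral_mul_self_eq_zero μ ?_⟩
  simpa [hc] using h v

variable [BorelSpace M] [CompactSpace M] [ConnectedSpace M]
variable (μ : Measure M) [IsFiniteMeasure μ] [Measure.IsOpenPosMeasure μ]
variable (n : ℝ) (P : C(M, ℝ) →ₗ[ℝ] C(M, ℝ)) (Q : C(M, ℝ))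


theorem stmt9
    (hPsa : ∀ u v : C(M, ℝ), ∫ x, u x * P v x ∂μ = ∫ x, P u x * v x ∂μ) :
    NQ μ P Q =
      {u : C(M, ℝ) | ∀ ω : C(M, ℝ),
        ∫ x, u x * Qcurv n P Q ω x ∂(confMeasure μ n ω) = 0} := by
  ext u
  simp only [NQ, Set.mem_ofPred_eq, integral_mul_Qcurv_confMeasure,
    integral_mul_add_apply_eq μ P hPsa, forall_add_integral_mul_eq_zero_iff]
  exact and_comm
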